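/- Let q be a prime power, k > 1, and consider the pseudo-projective rectangle R(q, q^k) inside PG(2, q^k): fix the point D = [0,0,1], take the special lines s_β : x + βy = 0 for β ∈ F_q and s_∞ : y = 0, let the point set be the union of these q+1 lines, and let ordinary lines be the restrictions of lines ⟨a,b,1⟩ (a, b ∈ F_{q^k}) to this point set. Then the graph whose vertices are the ordinary lines, adjacent iff they share a point of the point set, is isomorphic to the bilinear forms graph H_q(2,k): two lines ⟨a1,b1,1⟩ and ⟨a2,b2,1⟩ are adjacent iff (a2-a1, b2-b1), viewed as a 2×k matrix over F_q via a fixed F_q-basis of F_{q^k}, has rank 1. -/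

import Mathlib

/-! Write `v - u = (x, y)`. For `u ≠ v` the projective lines `⟨a₁,b₁,1⟩` and `⟨a₂,b₂,1⟩` meet in
the single point `[y, -x, b₁x - a₁y]`, which lies on `s_∞` iff `x = 0` and on `s_β` iff `y = βx`.
The rows of the matrix of `v - u` are `B(x)` and `B(y)`, so its rank is `dim_F span{x, y}`,
which is `1` exactly when `(x, y) ≠ 0` and either `x = 0` or `y ∈ F x`. So the two adjacency
relations agree, and `B × B` is a bijection `K × K → F^{2×k}`. -/

open scoped LinearAlgebra.Projectivization Classical

noncomputable section

/-- The point set `𝒫` of the pseudo-projective rectangle `R(q, q^k)` inside `PG(2, K)`,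
where `F ⊆ K` realizes `F_q ⊆ F_{q^k}`: the union of the special lines
`s_β : x + βy = 0` (for `β ∈ F`) and `s_∞ : y = 0`, all through `D = [0,0,1]`.
Incidence with a line `⟨a,b,c⟩` is `a*x + b*y + c*z = 0` on a (hence any) homogeneous
representative. -/
def PRpoints (F K : Type*) [Field F] [Field K] [Algebra F K] : Set (ℙ K (Fin 3 → K)) :=
  {Pt | Pt.rep 1 = 0 ∨ ∃ β : F, Pt.rep 0 + algebraMap F K β * Pt.rep 1 = 0}

/-- The ordinary line `⟨a,b,1⟩` of the pseudo-projective rectangle: the restriction of the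
projective line `a*x + b*y + z = 0` to the point set `𝒫`. -/
def PRordLine (F : Type*) {K : Type*} [Field F] [Field K] [Algebra F K] (a b : K) :
    Set (ℙ K (Fin 3 → K)) :=
  {Pt ∈ PRpoints F K | a * Pt.rep 0 + b * Pt.rep 1 + Pt.rep 2 = 0}

/-- The graph of lines of the pseudo-projective rectangle: vertices are the ordinary lines
`⟨a,b,1⟩`, indexed by `(a,b) ∈ K × K`, two adjacent iff they share a point of `𝒫`. -/
def PRgraph (F K : Type*) [Field F] [Field K] [Algebra F K] : SimpleGraph (K × K) where
  Adj u v := u ≠ v ∧ (PRordLine F u.1 u.2 ∩ PRordLine F v.1 v.2).Nonempty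
  symm := ⟨by
    rintro u v ⟨h, p, hp1, hp2⟩
    exact ⟨h.symm, p, hp2, hp1⟩⟩
  loopless := ⟨fun u hu => hu.1 rfl⟩

/-- The bilinear forms graph `H_q(2,k)` over a field `F` with `q = |F|`: vertices the
`2 × k` matrices over `F`, adjacent iff the difference has rank 1. -/
def bilinFormsGraph (F : Type*) [Field F] (k : ℕ) : SimpleGraph (Matrix (Fin 2) (Fin k) F) where
  Adj M N := M ≠ N ∧ (M - N).rank = 1
  symm := ⟨by
    rintro M N ⟨h, hr⟩
    refine ⟨h.symm, ?_⟩
    rw [show N - M = -(M - N) by abel]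
    have hneg : (-(M - N)).rank = (M - N).rank := by
      unfold Matrix.rank
      rw [show (-(M - N)).mulVecLin = -((M - N).mulVecLin) by
            ext v; simp [Matrix.neg_mulVec], LinearMap.range_neg]
    rw [hneg]; exact hr⟩
  loopless := ⟨fun M hM => hM.1 rfl⟩

/-- The matrix `M(l)` of the ordinary line `l = ⟨a,b,1⟩`: rows are the coordinate vectors
`B(a)`, `B(b)` of `a, b ∈ K` with respect to a fixed `F`-basis of `K`. -/
def lineMatrix {F K : Type*} [Field F] [Field K] [Algebra F K] {k : ℕ}
    (b : Module.Basis (Fin k) F K) (u : K × K) : Matrix (Fin 2) (Fin k) F :=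
  Matrix.of fun i j => b.repr (![u.1, u.2] i) j

/-- The slope `d.2 / d.1` lies in `F ∪ {∞}` (this holds trivially for `d = 0`). -/
def HasSlopeIn (F : Type*) {V : Type*} [SMul F V] [Zero V] (d : V × V) : Prop :=
  d.1 = 0 ∨ ∃ β : F, β • d.1 = d.2

theorem finrank_span_pair_eq_one_iff {K V : Type*} [Field K] [AddCommGroup V] [Module K V]
    {x y : V} :
    Module.finrank K (Submodule.span K {x, y}) = 1 ↔ (x, y) ≠ 0 ∧ HasSlopeIn K (x, y) := by
  by_cases hx : x = 0
  · subst hx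
    rw [Submodule.span_insert_zero]
    by_cases hy : y = 0
    · subst hy; rw [Submodule.span_zero_singleton, finrank_bot]; simp
    · simp [HasSlopeIn, hy, finrank_span_singleton hy]
  have hle : K ∙ x ≤ Submodule.span K {x, y} := Submodule.span_mono (by simp)
  have : FiniteDimensional K (Submodule.span K {x, y}) :=
    FiniteDimensional.span_of_finite K (Set.toFinite _)
  calc Module.finrank K (Submodule.span K {x, y}) = 1
      ↔ Submodule.span K {x, y} = K ∙ x :=
        ⟨fun h => (Submodule.eq_of_le_of_finrank_eq hle
            (by rw [h, finrank_span_singleton hx])).symm,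
          fun h => h ▸ finrank_span_singleton hx⟩
    _ ↔ y ∈ K ∙ x :=
        ⟨fun h => h ▸ Submodule.subset_span (by simp),
          fun h => by rw [Set.pair_comm, Submodule.span_insert_eq_span h]⟩
    _ ↔ _ := by simp [HasSlopeIn, hx, Submodule.mem_span_singleton]

theorem rank_of_repr_eq_finrank_span {F V : Type*} [Field F] [AddCommGroup V] [Module F V]
    {k m : ℕ} (b : Module.Basis (Fin k) F V) (v : Fin m → V) :
    (Matrix.of fun i j => b.repr (v i) j).rank =
      Module.finrank F (Submodule.span F (Set.range v)) := by
  rw [Matrix.rank_eq_finrank_span_row, ← LinearEquiv.finrank_map_eq b.equivFun,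
    Submodule.map_span, ← Set.range_comp]
  rfl

section PseudoProjectiveRectangle

variable {F K : Type*} [Field F] [Field K] [Algebra F K]

theorem mk_mem_PRordLine_iff {a b : K} {w : Fin 3 → K} (hw : w ≠ 0) :
    Projectivization.mk K w hw ∈ PRordLine F a b ↔
      (w 1 = 0 ∨ ∃ β : F, w 0 + algebraMap F K β * w 1 = 0) ∧
        a * w 0 + b * w 1 + w 2 = 0 := by
  obtain ⟨c, hc⟩ := Projectivization.exists_smul_eq_mk_rep K w hw
  simp only [PRordLine, PRpoints, Set.mem_ofPred_eq, ← hc, Units.smul_def, Pi.smul_apply,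
    smul_eq_mul]
  have hc0 : (c : K) ≠ 0 := c.ne_zero
  have hs (β : K) : (c : K) * w 0 + β * (c * w 1) = c * (w 0 + β * w 1) := by ring
  have hl : a * (c * w 0) + b * (c * w 1) + c * w 2 = c * (a * w 0 + b * w 1 + w 2) := by ring
  simp only [hs, hl, mul_eq_zero, hc0, false_or]

theorem hasSlopeIn_of_mem_PRordLine_inter {u v : K × K} {P : ℙ K (Fin 3 → K)}
    (hu : P ∈ PRordLine F u.1 u.2) (hv : P ∈ PRordLine F v.1 v.2) : HasSlopeIn F (v - u) := by
  obtain ⟨a₁, b₁⟩ := u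
  obtain ⟨a₂, b₂⟩ := v
  obtain ⟨w, hw, rfl⟩ : ∃ w hw, P = Projectivization.mk K w hw :=
    ⟨P.rep, P.rep_nonzero, P.mk_rep.symm⟩
  rw [mk_mem_PRordLine_iff] at hu hv
  obtain ⟨hP, hu⟩ := hu
  simp only [HasSlopeIn, Prod.mk_sub_mk, Algebra.smul_def]
  have hsub : (a₂ - a₁) * w 0 + (b₂ - b₁) * w 1 = 0 := by linear_combination hv.2 - hu
  have hxy : ¬(w 0 = 0 ∧ w 1 = 0) := by
    rintro ⟨hx, hy⟩
    have hz : w 2 = 0 := by linear_combination hu - a₁ * hx - b₁ * hy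
    exact hw (funext fun i => by fin_cases i <;> assumption)
  by_cases hy : w 1 = 0
  · left
    have hx : w 0 ≠ 0 := fun hx => hxy ⟨hx, hy⟩
    exact (mul_eq_zero.1 (by linear_combination hsub - (b₂ - b₁) * hy)).resolve_right hx
  · obtain ⟨β, hβ⟩ := hP.resolve_left hy
    refine Or.inr ⟨β, sub_eq_zero.1 ((mul_eq_zero.1 ?_).resolve_right hy)⟩
    linear_combination (a₂ - a₁) * hβ - hsub

theorem PRordLine_inter_nonempty_of_hasSlopeIn {u v : K × K} (huv : u ≠ v)
    (h : HasSlopeIn F (v - u)) : (PRordLine F u.1 u.2 ∩ PRordLine F v.1 v.2).Nonempty := by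
  obtain ⟨a₁, b₁⟩ := u
  obtain ⟨a₂, b₂⟩ := v
  simp only [HasSlopeIn, Prod.mk_sub_mk, Algebra.smul_def] at h
  set w : Fin 3 → K := ![b₂ - b₁, -(a₂ - a₁), b₁ * (a₂ - a₁) - a₁ * (b₂ - b₁)]
  have hw₀ : w 0 = b₂ - b₁ := rfl
  have hw₁ : w 1 = -(a₂ - a₁) := rfl
  have hw₂ : w 2 = b₁ * (a₂ - a₁) - a₁ * (b₂ - b₁) := rfl
  have hw : w ≠ 0 := by
    intro h0
    have hx : a₂ - a₁ = 0 := neg_eq_zero.1 (hw₁ ▸ congrFun h0 1)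
    have hy : b₂ - b₁ = 0 := hw₀ ▸ congrFun h0 0
    exact huv (by rw [sub_eq_zero.1 hx, sub_eq_zero.1 hy])
  have hP : w 1 = 0 ∨ ∃ β : F, w 0 + algebraMap F K β * w 1 = 0 := by
    rcases h with hx | ⟨β, hβ⟩
    · exact Or.inl (by rw [hw₁, hx, neg_zero])
    · exact Or.inr ⟨β, by rw [hw₀, hw₁]; linear_combination -hβ⟩
  refine ⟨Projectivization.mk K w hw, ?_, ?_⟩ <;> rw [mk_mem_PRordLine_iff] <;>
    exact ⟨hP, by rw [hw₀, hw₁, hw₂]; ring⟩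

theorem PRgraph_adj_iff {u v : K × K} :
    (PRgraph F K).Adj u v ↔ u ≠ v ∧ HasSlopeIn F (v - u) :=
  and_congr_right fun huv =>
    ⟨fun ⟨_, hu, hv⟩ => hasSlopeIn_of_mem_PRordLine_inter hu hv,
      PRordLine_inter_nonempty_of_hasSlopeIn huv⟩

variable {k : ℕ} (b : Module.Basis (Fin k) F K)

theorem lineMatrix_sub (u v : K × K) :
    lineMatrix b v - lineMatrix b u = lineMatrix b (v - u) := by
  ext i j
  fin_cases i <;> simp [lineMatrix]

theorem rank_lineMatrix_eq_one_iff (w : K × K) :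
    (lineMatrix b w).rank = 1 ↔ w ≠ 0 ∧ HasSlopeIn F w := by
  rw [lineMatrix, rank_of_repr_eq_finrank_span, Matrix.range_cons_cons_empty,
    finrank_span_pair_eq_one_iff]

def lineMatrixEquiv : K × K ≃ Matrix (Fin 2) (Fin k) F where
  toFun := lineMatrix b
  invFun M := (b.equivFun.symm (M 0), b.equivFun.symm (M 1))
  left_inv u := Prod.ext (b.equivFun.symm_apply_apply u.1) (b.equivFun.symm_apply_apply u.2)
  right_inv M := by
    ext i j
    fin_cases i
    exacts [congrFun (b.equivFun.apply_symm_apply (M 0)) j,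
      congrFun (b.equivFun.apply_symm_apply (M 1)) j]

end PseudoProjectiveRectangle

theorem stmt16_general (k : ℕ)
    (F K : Type*) [Field F] [Field K] [Algebra F K]
    (b : Module.Basis (Fin k) F K) :
    (∀ u v : K × K, (PRgraph F K).Adj u v ↔
      u ≠ v ∧ (lineMatrix b v - lineMatrix b u).rank = 1) ∧
    Nonempty (PRgraph F K ≃g bilinFormsGraph F k) := by
  have hadj (u v : K × K) : (PRgraph F K).Adj u v ↔
      u ≠ v ∧ (lineMatrix b v - lineMatrix b u).rank = 1 := by
    rw [PRgraph_adj_iff, lineMatrix_sub, rank_lineMatrix_eq_one_iff, sub_ne_zero, ne_comm,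
      and_self_left]
  refine ⟨hadj, ⟨⟨lineMatrixEquiv b, fun {u v} => ?_⟩⟩⟩
  change (bilinFormsGraph F k).Adj (lineMatrix b u) (lineMatrix b v) ↔ _
  rw [SimpleGraph.adj_comm, hadj, ne_comm]
  exact and_congr_left' (lineMatrixEquiv b).injective.ne_iff

/-- For a prime power `q` and `k > 1`, the graph of lines of the
pseudo-projective rectangle `R(q, q^k)` in `PG(2, q^k)` is isomorphic to the bilinear forms
graph `H_q(2,k)`; explicitly, two ordinary lines `⟨a1,b1,1⟩`, `⟨a2,b2,1⟩` are adjacent iff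
the `2 × k` matrix of `(a2-a1, b2-b1)` over `F_q` has rank 1. -/
theorem stmt16 (q k : ℕ) (hq : IsPrimePow q) (hk : 1 < k)
    (F K : Type*) [Field F] [Field K] [Fintype F] [Fintype K] [Algebra F K]
    (hF : Fintype.card F = q) (hK : Fintype.card K = q ^ k)
    (b : Module.Basis (Fin k) F K) :
    (∀ u v : K × K, (PRgraph F K).Adj u v ↔
      u ≠ v ∧ (lineMatrix b v - lineMatrix b u).rank = 1) ∧
    Nonempty (PRgraph F K ≃g bilinFormsGraph F k) :=
  stmt16_general k F K b
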